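/- Let N be a finite set and suppose v = v_and + v_or, where v_and, v_or : Set N → ℝ. Then for every T ⊆ N, v(T) = ∑_{S ⊆ T} I_and(S) + I_or(∅) + ∑_{S ∩ T ≠ ∅} I_or(S), where I_and is the AND interaction of v_and and I_or is the OR interaction of v_or. -/

import Mathlib

open Finset MeasureTheory

variable {N : Type*} [Fintype N] [DecidableEq N]

noncomputable def Iand (v : Finset N → ℝ) (S : Finset N) : ℝ :=
  ∑ T ∈ S.powerset, (-1 : ℝ) ^ (S.card - T.card) * v T

noncomputable def Ior (v : Finset N → ℝ) (S : Finset N) : ℝ :=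
  if S = ∅ then v ∅
  else -∑ T ∈ S.powerset, (-1 : ℝ) ^ (S.card - T.card) * v (Finset.univ \ T)

/-! `Iand` is the Möbius transform of a set function on the Boolean lattice, so summing it over
the subsets of `A` gives back the value at `A`. Away from `∅`, `Ior v` is minus the Möbius
transform of the dual function `U ↦ v (N \ U)`. The sets meeting `T` are all subsets of `N`
except those of `N \ T`, so summing `Ior v` over them gives `-(v ∅ - v T)`, and adding
`Ior v ∅ = v ∅` leaves `v T`. -/

theorem Finset.sum_Icc_neg_one_pow_card_sub {α R : Type*} [DecidableEq α] [Ring R]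
    {U A : Finset α} (hUA : U ⊆ A) :
    ∑ S ∈ Icc U A, (-1 : R) ^ (#S - #U) = if U = A then 1 else 0 := by
  have hdisj : ∀ X ∈ (A \ U).powerset, Disjoint U X := fun X hX =>
    disjoint_of_subset_right (mem_powerset.1 hX) disjoint_sdiff
  have hinj : Set.InjOn (U ∪ ·) (A \ U).powerset := fun X hX Y hY hXY => by
    rw [← union_sdiff_cancel_left (hdisj X hX), ← union_sdiff_cancel_left (hdisj Y hY)]
    exact congrArg (· \ U) hXY
  calc ∑ S ∈ Icc U A, (-1 : R) ^ (#S - #U)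
      = ∑ X ∈ (A \ U).powerset, (-1 : R) ^ #X := by
        rw [Icc_eq_image_powerset hUA, sum_image hinj]
        refine sum_congr rfl fun X hX => ?_
        rw [card_union_of_disjoint (hdisj X hX), Nat.add_sub_cancel_left]
    _ = ((∑ X ∈ (A \ U).powerset, (-1 : ℤ) ^ #X : ℤ) : R) := by push_cast; rfl
    _ = if U = A then 1 else 0 := by
        have hempty : A \ U = ∅ ↔ U = A := by
          rw [sdiff_eq_empty_iff_subset]
          exact ⟨subset_antisymm hUA, fun h => h ▸ subset_rfl⟩
        simp only [sum_powerset_neg_one_pow_card, hempty]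
        split_ifs <;> simp

theorem sum_powerset_Iand {α : Type*} [DecidableEq α] (f : Finset α → ℝ) (A : Finset α) :
    ∑ S ∈ A.powerset, Iand f S = f A := by
  calc ∑ S ∈ A.powerset, Iand f S
      = ∑ U ∈ A.powerset, ∑ S ∈ Icc U A, (-1 : ℝ) ^ (#S - #U) * f U := by
        refine sum_comm' fun S U => ?_
        simp only [mem_powerset, mem_Icc]
        exact ⟨fun h => ⟨⟨h.2, h.1⟩, h.2.trans h.1⟩, fun h => ⟨h.1.2, h.1.1⟩⟩
    _ = ∑ U ∈ A.powerset, (if U = A then 1 else 0) * f U := by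
        refine sum_congr rfl fun U hU => ?_
        rw [← sum_mul, sum_Icc_neg_one_pow_card_sub (mem_powerset.1 hU)]
    _ = f A := by simp

theorem Ior_eq_neg_Iand_compl (f : Finset N → ℝ) {S : Finset N} (hS : S ≠ ∅) :
    Ior f S = -Iand (fun U => f (univ \ U)) S := by
  rw [Ior, if_neg hS, Iand]

theorem powerset_univ_filter_not_inter_nonempty (T : Finset N) :
    {S ∈ (univ : Finset N).powerset | ¬(S ∩ T).Nonempty} = (univ \ T).powerset := by
  ext S
  simp [subset_sdiff, not_nonempty_iff_eq_empty, disjoint_iff_inter_eq_empty]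

theorem Ior_empty_add_sum_Ior_inter_nonempty (f : Finset N → ℝ) (T : Finset N) :
    Ior f ∅ + ∑ S ∈ (univ : Finset N).powerset with (S ∩ T).Nonempty, Ior f S = f T := by
  set g : Finset N → ℝ := fun U => f (univ \ U)
  have hsplit := sum_filter_add_sum_filter_not univ.powerset (fun S => (S ∩ T).Nonempty) (Iand g)
  rw [powerset_univ_filter_not_inter_nonempty, sum_powerset_Iand, sum_powerset_Iand] at hsplit
  have hIor : ∀ S ∈ {S ∈ (univ : Finset N).powerset | (S ∩ T).Nonempty}, Ior f S = -Iand g S :=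
    fun S hS => Ior_eq_neg_Iand_compl f ((mem_filter.1 hS).2.mono inter_subset_left).ne_empty
  rw [sum_congr rfl hIor, sum_neg_distrib, Ior, if_pos rfl]
  have hg_univ : g univ = f ∅ := by simp [g]
  have hg_compl : g (univ \ T) = f T := by simp [g]
  linarith

theorem and_or_universal_matching (v vand vor : Finset N → ℝ)
    (hdecomp : ∀ T, v T = vand T + vor T) (T : Finset N) :
    v T = (∑ S ∈ T.powerset, Iand vand S) + Ior vor ∅ +
      ∑ S ∈ Finset.univ.powerset.filter (fun S => (S ∩ T).Nonempty), Ior vor S := by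
  rw [hdecomp T, sum_powerset_Iand, add_assoc, Ior_empty_add_sum_Ior_inter_nonempty]
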